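/- arXiv:2001.10387 — 3 statements merged into one kernel-verified Lean document; each statement's English description precedes it below -/
import Mathlib

section
/- Let X be a random vector, Y a target variable, and V a random variable such that V - X - Y is a Markov chain and V is independent of the sub-vector X^α for some subset α of indices. Then I(V;Y) ≤ I(Y; X^{-α} | X^α), where X^{-α} denotes the remaining coordinates of X. -/
open Finset
open scoped BigOperators Classical

/-- Shannon entropy (in bits) of a finite distribution. -/
noncomputable def H {A : Type*} [Fintype A] (p : A → ℝ) : ℝ :=
  ∑ a, (if p a = 0 then 0 else -(p a * Real.logb 2 (p a)))

/-- Shannon mutual information (in bits) of a finite joint distribution. -/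
noncomputable def MI {A B : Type*} [Fintype A] [Fintype B] (p : A → B → ℝ) : ℝ :=
  ∑ a, ∑ b,
    (if p a b = 0 then 0 else
      p a b * Real.logb 2 (p a b / ((∑ b', p a b') * (∑ a', p a' b))))

/-- Conditional mutual information `I(A; B | C)` of a finite joint distribution. -/
noncomputable def CMI {A B C : Type*} [Fintype A] [Fintype B] [Fintype C]
    (p : A → B → C → ℝ) : ℝ :=
  ∑ a, ∑ b, ∑ c,
    (if p a b c = 0 then 0 else
      p a b c * Real.logb 2
        ((p a b c * (∑ a', ∑ b', p a' b' c)) /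
          ((∑ b', p a b' c) * (∑ a', p a' b c))))

def IsJoint {A B : Type*} [Fintype A] [Fintype B] (p : A → B → ℝ) : Prop :=
  (∀ a b, 0 ≤ p a b) ∧ ∑ a, ∑ b, p a b = 1

def IsDist {A : Type*} [Fintype A] (p : A → ℝ) : Prop :=
  (∀ a, 0 ≤ p a) ∧ ∑ a, p a = 1

def IsChannel {A B : Type*} [Fintype A] [Fintype B] (c : A → B → ℝ) : Prop :=
  (∀ a b, 0 ≤ c a b) ∧ ∀ a, ∑ b, c a b = 1

/-- Given a joint distribution `q` of `(V, X)`, the pair `(V, f(X))` is independent. -/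
def IndepWithFun {V X T : Type*} [Fintype V] [Fintype X] (q : V → X → ℝ) (f : X → T) : Prop :=
  ∀ v t, (∑ x, if f x = t then q v x else 0) =
    (∑ x, q v x) * (∑ v', ∑ x, if f x = t then q v' x else 0)

/-- Markov chain `A - B - C`: conditional independence of `A` and `C` given `B`. -/
def MarkovChain {A B C : Type*} [Fintype A] [Fintype B] [Fintype C]
    (q : A → B → C → ℝ) : Prop :=
  ∀ a b c, q a b c * (∑ a', ∑ c', q a' b c') =
    (∑ c', q a b c') * (∑ a', q a' b c)

/-- Restriction `X^α` of a tuple to the coordinates in `α`. -/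
def restr {n : ℕ} {𝓧 : Fin n → Type*} (α : Finset (Fin n)) (x : ∀ i, 𝓧 i) :
    ∀ i : α, 𝓧 i.1 := fun i => x i.1

/-- The set of values `I(V;Y)` achievable through `𝛂`-synergistic channels `p_{V|X}`
(so that `V - X - Y` is a Markov chain and `V ⫫ X^α` for every `α ∈ A`). -/
def synSet {n : ℕ} {𝓧 : Fin n → Type*} [∀ i, Fintype (𝓧 i)] {Y : Type*} [Fintype Y]
    (p : (∀ i, 𝓧 i) → Y → ℝ) (A : Finset (Finset (Fin n))) : Set ℝ :=
  { r | ∃ (k : ℕ) (c : (∀ i, 𝓧 i) → Fin k → ℝ), IsChannel c ∧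
      (∀ α ∈ A, IndepWithFun (fun v x => c x v * (∑ y, p x y)) (restr (𝓧 := 𝓧) α)) ∧
      r = MI (fun (v : Fin k) (y : Y) => ∑ x, c x v * p x y) }

/-- Synergistic disclosure `S^𝛂(X → Y)`. -/
noncomputable def Syn {n : ℕ} {𝓧 : Fin n → Type*} [∀ i, Fintype (𝓧 i)] {Y : Type*} [Fintype Y]
    (p : (∀ i, 𝓧 i) → Y → ℝ) (A : Finset (Finset (Fin n))) : ℝ :=
  sSup (synSet p A)

/-- The joint distribution of the pair `(X, X)`, used for self-synergy `S^𝛂(X → X)`. -/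
noncomputable def selfJoint {X : Type*} [Fintype X] (pX : X → ℝ) : X → X → ℝ :=
  fun x x' => if x' = x then pX x else 0

/-!
Write `p(v, a, b, y)` for the law of `(V, X^α, X^{-α}, Y)`. On the support of `p`, the Markov
property `p(y | a, b) = p(y | v, a, b)` and the independence `p(v, a) = p(v) p(a)` turn the ratio
inside `I(Y; X^{-α} | X^α)` into the ratio inside `I(V; Y)` times `p / r`, where
`r(v, a, b, y) = p(v, y) p(a | y) p(b | v, a)`. So the difference of the two informations is
`∑ p log (p / r)`, which is nonnegative by Gibbs' inequality because `r` has total mass at most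
that of `p`.
-/

open Real

lemma ite_eq_zero_mul (x L : ℝ) : (if x = 0 then 0 else x * L) = x * L :=
  ite_eq_right_iff.2 fun h => by rw [h, zero_mul]

lemma sub_div_log_two_le_mul_logb_div {p r : ℝ} (hp : 0 < p) (hr : 0 < r) :
    (p - r) / log 2 ≤ p * logb 2 (p / r) := by
  have hlog2 : 0 < log 2 := log_pos one_lt_two
  have key : 1 - r / p ≤ log (p / r) := by
    simpa only [inv_div] using one_sub_inv_le_log_of_pos (div_pos hp hr)
  rw [logb, div_le_iff₀ hlog2, mul_div_assoc', div_mul_cancel₀ _ hlog2.ne']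
  calc p - r = p * (1 - r / p) := by field_simp
    _ ≤ p * log (p / r) := mul_le_mul_of_nonneg_left key hp.le

lemma sum_div_sum_le_one {ι : Type*} [Fintype ι] (f : ι → ℝ) :
    ∑ i, f i / ∑ j, f j ≤ 1 := by
  rw [← Finset.sum_div]
  exact div_self_le_one _

lemma sum_pos_of_pos {ι : Type*} [Fintype ι] {f : ι → ℝ} (hf : ∀ i, 0 ≤ f i) {i : ι}
    (hi : 0 < f i) : 0 < ∑ j, f j :=
  Finset.sum_pos' (fun j _ => hf j) ⟨i, Finset.mem_univ i, hi⟩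

section

variable {V A B Y : Type*} [Fintype V] [Fintype A] [Fintype B] [Fintype Y]
  (p : V → A → B → Y → ℝ)

-- The sums are nested as in the unfoldings of `MI` and `CMI`.
def margVY (v : V) (y : Y) : ℝ := ∑ a, ∑ b, p v a b y
def margV (v : V) : ℝ := ∑ y, margVY p v y
def margY (y : Y) : ℝ := ∑ v, margVY p v y
def margABY (a : A) (b : B) (y : Y) : ℝ := ∑ v, p v a b y
def margA (a : A) : ℝ := ∑ y, ∑ b, margABY p a b y
def margAY (a : A) (y : Y) : ℝ := ∑ b, margABY p a b y
def margAB (a : A) (b : B) : ℝ := ∑ y, margABY p a b y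
def margVAB (v : V) (a : A) (b : B) : ℝ := ∑ y, p v a b y
def margVA (v : V) (a : A) : ℝ := ∑ b, margVAB p v a b

/-- The comparison law `p(v, y) p(a | y) p(b | v, a)` for Gibbs' inequality; where a conditional
is undefined it is `0` (as `x / 0 = 0`), so its total mass is at most that of `p`. -/
noncomputable def gibbsRef (v : V) (a : A) (b : B) (y : Y) : ℝ :=
  margVAB p v a b / margVA p v a * (margAY p a y / margY p y) * margVY p v y

end

lemma margVY_nonneg {V A B Y : Type*} [Fintype A] [Fintype B] {p : V → A → B → Y → ℝ}
    (hp : ∀ v a b y, 0 ≤ p v a b y) (v : V) (y : Y) : 0 ≤ margVY p v y :=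
  Finset.sum_nonneg' fun a => Finset.sum_nonneg' fun b => hp v a b y

section

variable {V A B Y : Type*} [Fintype V] [Fintype A] [Fintype B] [Fintype Y]
  (p : V → A → B → Y → ℝ)

lemma MI_marginal_eq :
    MI (fun v y => ∑ a, ∑ b, p v a b y) =
      ∑ v, ∑ y, ∑ a, ∑ b, p v a b y * logb 2 (margVY p v y / (margV p v * margY p y)) := by
  refine Finset.sum_congr rfl fun v _ => Finset.sum_congr rfl fun y _ => ?_
  exact (ite_eq_zero_mul _ _).trans <| (Finset.sum_mul _ _ _).trans <|
    Finset.sum_congr rfl fun a _ => Finset.sum_mul _ _ _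

lemma CMI_marginal_eq :
    CMI (fun y b a => ∑ v, p v a b y) =
      ∑ v, ∑ y, ∑ a, ∑ b, p v a b y *
        logb 2 (margABY p a b y * margA p a / (margAY p a y * margAB p a b)) := by
  have hterm : ∀ y b a, (if margABY p a b y = 0 then 0 else margABY p a b y *
      logb 2 (margABY p a b y * margA p a / (margAY p a y * margAB p a b))) =
      ∑ v, p v a b y * logb 2 (margABY p a b y * margA p a / (margAY p a y * margAB p a b)) :=
    fun y b a => (ite_eq_zero_mul _ _).trans (Finset.sum_mul _ _ _)
  refine (Finset.sum_congr rfl fun y _ => Finset.sum_congr rfl fun b _ =>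
    Finset.sum_congr rfl fun a _ => hterm y b a).trans ?_
  simp_rw [Finset.sum_comm (γ := A) (α := V), Finset.sum_comm (γ := B) (α := V),
    Finset.sum_comm (γ := Y) (α := V), Finset.sum_comm (γ := B) (α := A)]

variable {p}

lemma sum_gibbsRef_le (hp : ∀ v a b y, 0 ≤ p v a b y) :
    ∑ v, ∑ y, ∑ a, ∑ b, gibbsRef p v a b y ≤ ∑ v, ∑ y, ∑ a, ∑ b, p v a b y := by
  have hVY := margVY_nonneg hp
  have hY : ∀ y, margY p y = ∑ a, margAY p a y := fun y => by
    simp_rw [margY, margVY, margAY, margABY, Finset.sum_comm (γ := V)]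
  have hAY : ∀ a y, 0 ≤ margAY p a y / margY p y := fun a y => div_nonneg
    (Finset.sum_nonneg fun b _ => Finset.sum_nonneg fun v _ => hp v a b y)
    (Finset.sum_nonneg fun v _ => hVY v y)
  gcongr ∑ v, ∑ y, ?_ with v _ y _
  calc ∑ a, ∑ b, gibbsRef p v a b y
      = ∑ a, (∑ b, margVAB p v a b / margVA p v a) * (margAY p a y / margY p y) * margVY p v y := by
        simp only [gibbsRef, Finset.sum_mul]
    _ ≤ ∑ a, margAY p a y / margY p y * margVY p v y := Finset.sum_le_sum fun a _ => by
        rw [mul_assoc]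
        exact mul_le_of_le_one_left (mul_nonneg (hAY a y) (hVY v y)) (sum_div_sum_le_one _)
    _ = (∑ a, margAY p a y / ∑ a', margAY p a' y) * margVY p v y := by
        rw [Finset.sum_mul, hY]
    _ ≤ margVY p v y := mul_le_of_le_one_left (hVY v y) (sum_div_sum_le_one _)

lemma gibbsRef_nonneg (hp : ∀ v a b y, 0 ≤ p v a b y) (v : V) (a : A) (b : B) (y : Y) :
    0 ≤ gibbsRef p v a b y := by
  have hAY : 0 ≤ margAY p a y :=
    Finset.sum_nonneg' fun b => Finset.sum_nonneg' fun v => hp v a b y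
  have hY : 0 ≤ margY p y := Finset.sum_nonneg' fun v => margVY_nonneg hp v y
  have hVAB : ∀ b, 0 ≤ margVAB p v a b := fun b => Finset.sum_nonneg' (hp v a b)
  have hVA : 0 ≤ margVA p v a := Finset.sum_nonneg' hVAB
  exact mul_nonneg (mul_nonneg (div_nonneg (hVAB b) hVA) (div_nonneg hAY hY))
    (margVY_nonneg hp v y)

lemma mul_logb_add_sub_div_le (hp : ∀ v a b y, 0 ≤ p v a b y)
    (hmc : ∀ v a b y, p v a b y * margAB p a b = margVAB p v a b * margABY p a b y)
    (hind : ∀ v a, margVA p v a = margV p v * margA p a) (v : V) (a : A) (b : B) (y : Y) :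
    p v a b y * logb 2 (margVY p v y / (margV p v * margY p y)) +
        (p v a b y - gibbsRef p v a b y) / log 2 ≤
      p v a b y * logb 2 (margABY p a b y * margA p a / (margAY p a y * margAB p a b)) := by
  rcases (hp v a b y).eq_or_lt with h0 | h0
  · rw [← h0, zero_mul, zero_mul, zero_add, zero_sub]
    exact div_nonpos_of_nonpos_of_nonneg (neg_nonpos.2 (gibbsRef_nonneg hp v a b y))
      (log_nonneg one_le_two)
  have hVAB : 0 < margVAB p v a b := sum_pos_of_pos (hp v a b) h0
  have hVA : 0 < margVA p v a :=
    sum_pos_of_pos (fun b => Finset.sum_nonneg' (hp v a b)) hVAB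
  have hABY : 0 < margABY p a b y := sum_pos_of_pos (fun v => hp v a b y) h0
  have hAY : 0 < margAY p a y :=
    sum_pos_of_pos (fun b => Finset.sum_nonneg' fun v => hp v a b y) hABY
  have hAB : 0 < margAB p a b :=
    sum_pos_of_pos (fun y => Finset.sum_nonneg' fun v => hp v a b y) hABY
  have hVY : 0 < margVY p v y := sum_pos_of_pos (fun a => Finset.sum_nonneg' fun b => hp v a b y)
    (sum_pos_of_pos (fun b => hp v a b y) h0)
  have hV : 0 < margV p v := sum_pos_of_pos (margVY_nonneg hp v) hVY
  have hY : 0 < margY p y := sum_pos_of_pos (margVY_nonneg hp · y) hVY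
  have hr : 0 < gibbsRef p v a b y := by unfold gibbsRef; positivity
  have hratio : margABY p a b y * margA p a / (margAY p a y * margAB p a b) =
      margVY p v y / (margV p v * margY p y) * (p v a b y / gibbsRef p v a b y) := by
    rw [gibbsRef]
    field_simp
    rw [hind]
    linear_combination -(margV p v * margA p a) * hmc v a b y
  rw [hratio, logb_mul (by positivity) (by positivity), mul_add]
  linarith [sub_div_log_two_le_mul_logb_div h0 hr]

theorem MI_le_CMI_of_markov_of_indep (hp : ∀ v a b y, 0 ≤ p v a b y)
    (hmc : ∀ v a b y, p v a b y * margAB p a b = margVAB p v a b * margABY p a b y)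
    (hind : ∀ v a, margVA p v a = margV p v * margA p a) :
    MI (fun v y => ∑ a, ∑ b, p v a b y) ≤ CMI (fun y b a => ∑ v, p v a b y) := by
  have hgibbs : 0 ≤ ∑ v, ∑ y, ∑ a, ∑ b, (p v a b y - gibbsRef p v a b y) / log 2 := by
    simp only [← Finset.sum_div, Finset.sum_sub_distrib]
    exact div_nonneg (sub_nonneg.2 (sum_gibbsRef_le hp)) (log_nonneg one_le_two)
  rw [MI_marginal_eq, CMI_marginal_eq]
  refine (le_add_of_nonneg_right hgibbs).trans ?_
  simp only [← Finset.sum_add_distrib]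
  gcongr with v _ y _ a _ b _
  exact mul_logb_add_sub_div_le hp hmc hind v a b y

end

lemma Equiv.sum_eq_sum_sum_symm {X A B : Type*} [Fintype X] [Fintype A] [Fintype B]
    (e : X ≃ A × B) (g : X → ℝ) : ∑ x, g x = ∑ a, ∑ b, g (e.symm (a, b)) := by
  rw [← Fintype.sum_prod_type']
  exact (e.symm.sum_comp g).symm

lemma Equiv.sum_ite_fst_eq {X A B : Type*} [Fintype X] [Fintype A] [Fintype B]
    (e : X ≃ A × B) (g : X → ℝ) (a : A) :
    ∑ x, (if (e x).1 = a then g x else 0) = ∑ b, g (e.symm (a, b)) := by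
  rw [e.sum_eq_sum_sum_symm]
  simp

lemma Equiv.sum_ite_snd_fst_eq {X A B : Type*} [Fintype X] [DecidableEq A] [DecidableEq B]
    (e : X ≃ A × B) (g : X → ℝ) (a : A) (b : B) :
    ∑ x, (if (e x).2 = b ∧ (e x).1 = a then g x else 0) = g (e.symm (a, b)) := by
  have hfiber : ∀ x, ((e x).2 = b ∧ (e x).1 = a) ↔ x = e.symm (a, b) := fun x => by
    rw [Equiv.eq_symm_apply, Prod.ext_iff, and_comm]
  simp only [hfiber, Finset.sum_ite_eq', Finset.mem_univ, if_true]

theorem MI_le_CMI_of_equiv {X A B V Y : Type*} [Fintype X] [Fintype A] [Fintype B]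
    [DecidableEq A] [DecidableEq B] [Fintype V] [Fintype Y] (e : X ≃ A × B)
    (q : V → X → Y → ℝ) (hq : ∀ v x y, 0 ≤ q v x y) (hmc : MarkovChain q)
    (hind : IndepWithFun (fun v x => ∑ y, q v x y) (fun x => (e x).1)) :
    MI (fun v y => ∑ x, q v x y) ≤
      CMI (fun y b a => ∑ v, ∑ x, if (e x).2 = b ∧ (e x).1 = a then q v x y else 0) := by
  set p : V → A → B → Y → ℝ := fun v a b y => q v (e.symm (a, b)) y
  have hMI : (fun v y => ∑ x, q v x y) = fun v y => ∑ a, ∑ b, p v a b y := by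
    funext v y
    exact e.sum_eq_sum_sum_symm _
  have hCMI : (fun y b a => ∑ v, ∑ x, if (e x).2 = b ∧ (e x).1 = a then q v x y else 0) =
      fun y b a => ∑ v, p v a b y := by
    funext y b a
    simp only [e.sum_ite_snd_fst_eq]
    rfl
  rw [hMI, hCMI]
  refine MI_le_CMI_of_markov_of_indep (fun v a b y => hq _ _ _) (fun v a b y => ?_) (fun v a => ?_)
  · rw [show margAB p a b = ∑ v', ∑ y', p v' a b y' from Finset.sum_comm]
    exact hmc v (e.symm (a, b)) y
  · have hV : margV p v = ∑ a, ∑ b, ∑ y, p v a b y := by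
      simp_rw [margV, margVY, Finset.sum_comm (γ := Y)]
    have hA : margA p a = ∑ v, ∑ b, ∑ y, p v a b y := by
      simp_rw [margA, margABY, Finset.sum_comm (γ := Y), Finset.sum_comm (γ := B) (α := V)]
    have h := hind v a
    beta_reduce at h
    simp only [e.sum_ite_fst_eq] at h
    rw [e.sum_eq_sum_sum_symm (g := fun x => ∑ y, q v x y)] at h
    rw [hV, hA]
    exact h

def restrEquiv {n : ℕ} {𝓧 : Fin n → Type*} (α : Finset (Fin n)) :
    (∀ i, 𝓧 i) ≃ (∀ i : ↥α, 𝓧 i.1) × (∀ i : ↥αᶜ, 𝓧 i.1) where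
  toFun x := (restr α x, restr αᶜ x)
  invFun ab i := if h : i ∈ α then ab.1 ⟨i, h⟩ else ab.2 ⟨i, Finset.mem_compl.2 h⟩
  left_inv x := by
    funext i
    by_cases h : i ∈ α <;> simp [restr, h]
  right_inv ab := by
    ext i
    · simp [restr, i.2]
    · simp [restr, Finset.mem_compl.1 i.2]

theorem synergy_upper_bound_general
    {n : ℕ} {𝓧 : Fin n → Type*} [∀ i, Fintype (𝓧 i)]
    {V Y : Type*} [Fintype V] [Fintype Y]
    (q : V → (∀ i, 𝓧 i) → Y → ℝ) (α : Finset (Fin n))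
    (hpos : ∀ v x y, 0 ≤ q v x y)
    (hmc : MarkovChain q)
    (hind : IndepWithFun (fun v x => ∑ y, q v x y) (restr (𝓧 := 𝓧) α)) :
    MI (fun v y => ∑ x, q v x y) ≤
      CMI (fun (y : Y) (b : ∀ i : ↥αᶜ, 𝓧 i.1) (a : ∀ i : ↥α, 𝓧 i.1) =>
        ∑ v, ∑ x, if restr αᶜ x = b ∧ restr α x = a then q v x y else 0) :=
  MI_le_CMI_of_equiv (restrEquiv α) q hpos hmc hind

/-- if `V - X - Y` is a Markov chain and `V ⫫ X^α`, then
`I(V;Y) ≤ I(Y; X^{-α} | X^α)`. -/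
theorem synergy_upper_bound
    {n : ℕ} {𝓧 : Fin n → Type*} [∀ i, Fintype (𝓧 i)]
    {V Y : Type*} [Fintype V] [Fintype Y]
    (q : V → (∀ i, 𝓧 i) → Y → ℝ) (α : Finset (Fin n))
    (hpos : ∀ v x y, 0 ≤ q v x y)
    (hsum : ∑ v, ∑ x, ∑ y, q v x y = 1)
    (hmc : MarkovChain q)
    (hind : IndepWithFun (fun v x => ∑ y, q v x y) (restr (𝓧 := 𝓧) α)) :
    MI (fun v y => ∑ x, q v x y) ≤
      CMI (fun (y : Y) (b : ∀ i : ↥αᶜ, 𝓧 i.1) (a : ∀ i : ↥α, 𝓧 i.1) =>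
        ∑ v, ∑ x, if restr αᶜ x = b ∧ restr α x = a then q v x y else 0) :=
  synergy_upper_bound_general q α hpos hmc hind
end

section
/- Define the α-synergy S^𝛂(X → Y) as the supremum of I(V;Y) over all channels p_{V|X} such that V - X - Y is a Markov chain and V is independent of X^{α_i} for all α_i in 𝛂. Then S^𝛂(X → Y) ≤ min_{j} I(Y; X^{-α_j} | X^{α_j}). -/
open Finset
open scoped BigOperators Classical

/-!
Let `w(x, y, v) = p(x, y) c(x, v)` be the joint law of `(X, Y, V)`. Both `I(V; Y)` and
`I(Y; X | X^α)` (which equals `I(Y; X^{-α} | X^α)`) are `w`-averages of log-densities, so their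
difference is `∑ w log (w / s)` for the weight
`s(x, y, v) = c(x, v) P(x) P(y | x^α) P(v, y) / (P(v) P(y))`.
Summing `s` over `x` fiber by fiber, the independence of `V` and `X^α` turns
`∑_{x^α = a} P(v, x)` into `P(v) P(a)`; hence the total mass of `s` is at most one, and
Gibbs' inequality gives `I(V; Y) ≤ I(Y; X^{-α} | X^α)`.
-/

open Function Real

lemma ite_eq_zero_zero_mul (a b : ℝ) : (if a = 0 then 0 else a * b) = a * b := by
  split_ifs with h <;> simp [h]

lemma mul_div_le_of_nonneg (a : ℝ) {b : ℝ} (hb : 0 ≤ b) : a * (b / a) ≤ b := by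
  rcases eq_or_ne a 0 with rfl | ha
  · simpa using hb
  · rw [mul_div_cancel₀ _ ha]

lemma sub_div_log_two_le_mul_logb_div_s4 {w s : ℝ} (hw : 0 ≤ w) (hs : 0 ≤ s)
    (hws : 0 < w → 0 < s) : (w - s) / log 2 ≤ w * logb 2 (w / s) := by
  rcases hw.eq_or_lt with rfl | hw
  · simpa using div_nonpos_of_nonpos_of_nonneg (neg_nonpos.mpr hs) (log_nonneg one_le_two)
  · have hs := hws hw
    have hlog := one_sub_inv_le_log_of_pos (div_pos hw hs)
    rw [inv_div] at hlog
    calc (w - s) / log 2 = w * (1 - s / w) / log 2 := by field_simp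
      _ ≤ w * log (w / s) / log 2 := by gcongr
      _ = w * logb 2 (w / s) := by rw [logb, mul_div_assoc]

theorem sum_mul_logb_div_nonneg {ι : Type*} [Fintype ι] {w s : ι → ℝ} (hw : ∀ i, 0 ≤ w i)
    (hs : ∀ i, 0 ≤ s i) (hws : ∀ i, 0 < w i → 0 < s i) (hsum : ∑ i, s i ≤ ∑ i, w i) :
    0 ≤ ∑ i, w i * logb 2 (w i / s i) :=
  calc 0 ≤ (∑ i, w i - ∑ i, s i) / log 2 :=
        div_nonneg (sub_nonneg.mpr hsum) (log_nonneg one_le_two)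
    _ = ∑ i, (w i - s i) / log 2 := by rw [← Finset.sum_sub_distrib, Finset.sum_div]
    _ ≤ _ := Finset.sum_le_sum fun i _ => sub_div_log_two_le_mul_logb_div_s4 (hw i) (hs i) (hws i)

theorem CMI_nonneg {A B C : Type*} [Fintype A] [Fintype B] [Fintype C] {p : A → B → C → ℝ}
    (hp : ∀ a b c, 0 ≤ p a b c) : 0 ≤ CMI p := by
  set pC : C → ℝ := fun c => ∑ a, ∑ b, p a b c
  set pAC : A → C → ℝ := fun a c => ∑ b, p a b c
  set pBC : B → C → ℝ := fun b c => ∑ a, p a b c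
  have hCMI : CMI p = ∑ i : A × B × C, p i.1 i.2.1 i.2.2 *
      logb 2 (p i.1 i.2.1 i.2.2 / (pAC i.1 i.2.2 * pBC i.2.1 i.2.2 / pC i.2.2)) := by
    simp only [CMI, Fintype.sum_prod_type, ite_eq_zero_zero_mul, div_div_eq_mul_div]
    rfl
  have hpos : ∀ a b c, 0 < p a b c → 0 < pAC a c ∧ 0 < pBC b c ∧ 0 < pC c := by
    intro a b c h
    have hAC : 0 < pAC a c := h.trans_le (single_le_sum (fun b _ => hp a b c) (mem_univ b))
    refine ⟨hAC, h.trans_le (single_le_sum (fun a _ => hp a b c) (mem_univ a)), ?_⟩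
    exact hAC.trans_le (single_le_sum (f := (pAC · c))
      (fun a _ => sum_nonneg fun b _ => hp a b c) (mem_univ a))
  have hmarg : ∀ c, ∑ a, ∑ b, pAC a c * pBC b c / pC c = pC c := by
    intro c
    simp only [← sum_div]
    rw [← sum_mul_sum, show ∑ b, pBC b c = pC c from sum_comm, mul_self_div_self]
  rw [hCMI]
  refine sum_mul_logb_div_nonneg (fun _ => hp _ _ _) (fun i => ?_) (fun i hi => ?_) ?_
  · exact div_nonneg (mul_nonneg (sum_nonneg fun _ _ => hp _ _ _) (sum_nonneg fun _ _ => hp _ _ _))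
      (sum_nonneg fun _ _ => sum_nonneg fun _ _ => hp _ _ _)
  · obtain ⟨hAC, hBC, hC⟩ := hpos _ _ _ hi
    positivity
  · simp only [Fintype.sum_prod_type]
    rw [sum_comm_cycle, sum_comm_cycle (f := fun a b c => p a b c)]
    exact (sum_congr rfl fun c _ => hmarg c).le

section Fiber

variable {X T U V : Type*} [Fintype X]

noncomputable def fiberSum (f : X → T) (h : X → ℝ) (t : T) : ℝ :=
  ∑ x, if f x = t then h x else 0

lemma sum_mul_comp_eq_sum_fiberSum_mul [Fintype T] (f : X → T) (h : X → ℝ) (φ : T → ℝ) :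
    ∑ x, h x * φ (f x) = ∑ t, fiberSum f h t * φ t := by
  simp only [fiberSum, sum_mul, ite_mul, zero_mul]
  rw [sum_comm]
  refine sum_congr rfl fun x _ => ?_
  rw [sum_ite_eq, if_pos (mem_univ _)]

lemma sum_fiberSum [Fintype T] (f : X → T) (h : X → ℝ) :
    ∑ t, fiberSum f h t = ∑ x, h x := by
  simpa using (sum_mul_comp_eq_sum_fiberSum_mul f h fun _ => 1).symm

lemma fiberSum_sum [Fintype V] (f : X → T) (h : V → X → ℝ) (t : T) :
    fiberSum f (fun x => ∑ v, h v x) t = ∑ v, fiberSum f (h v) t := by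
  simp only [fiberSum]
  rw [sum_comm]
  refine sum_congr rfl fun x _ => ?_
  split_ifs <;> simp

lemma fiberSum_nonneg (f : X → T) {h : X → ℝ} (hh : ∀ x, 0 ≤ h x) (t : T) :
    0 ≤ fiberSum f h t :=
  sum_nonneg fun x _ => by split_ifs; exacts [hh x, le_rfl]

lemma le_fiberSum_apply (f : X → T) {h : X → ℝ} (hh : ∀ x, 0 ≤ h x) (x : X) :
    h x ≤ fiberSum f h (f x) := by
  unfold fiberSum
  simpa using single_le_sum (f := fun x' => if f x' = f x then h x' else 0)
    (fun x' _ => by split_ifs; exacts [hh x', le_rfl]) (mem_univ x)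

lemma sum_ite_and_eq_fiberSum [Fintype U] [DecidableEq U] [DecidableEq T] (g : X → U)
    (f : X → T) (h : X → ℝ) (t : T) :
    ∑ u, ∑ x, (if g x = u ∧ f x = t then h x else 0) = fiberSum f h t := by
  rw [sum_comm]
  refine sum_congr rfl fun x _ => ?_
  simp [ite_and]

lemma sum_ite_and_eq_of_injective [DecidableEq U] [DecidableEq T] {g : X → U} {f : X → T}
    (hinj : Injective fun x => (g x, f x)) (h : X → ℝ) (x : X) :
    ∑ x', (if g x' = g x ∧ f x' = f x then h x' else 0) = h x := by
  rw [sum_eq_single x (fun x' _ hx' => if_neg fun H => hx' (hinj (Prod.ext H.1 H.2)))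
    (fun hx => absurd (mem_univ x) hx), if_pos ⟨rfl, rfl⟩]

end Fiber

section Synergy

variable {X Y V T U : Type*} [Fintype X] {p : X → Y → ℝ} {c : X → V → ℝ}

noncomputable def markovJoint (c : X → V → ℝ) (p : X → Y → ℝ) (v : V) (y : Y) : ℝ :=
  ∑ x, c x v * p x y

lemma markovJoint_nonneg (hp : ∀ x y, 0 ≤ p x y) (hc : ∀ x v, 0 ≤ c x v) (v : V) (y : Y) :
    0 ≤ markovJoint c p v y :=
  sum_nonneg fun x _ => mul_nonneg (hc x v) (hp x y)

lemma sum_markovJoint_left [Fintype V] (hc : ∀ x, ∑ v, c x v = 1) (y : Y) :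
    ∑ v, markovJoint c p v y = ∑ x, p x y := by
  simp only [markovJoint]
  rw [sum_comm]
  exact sum_congr rfl fun x _ => by rw [← sum_mul, hc x, one_mul]

variable [Fintype Y]

/-- `P(x) P(y | f x)`: the law of `(X, Y)` with the same `(X, f X)`- and `(Y, f X)`-marginals as
`p` under which `X ⫫ Y` given `f X`; `I(Y; X | f X)` is the divergence of `p` from it. -/
noncomputable def condIndepJoint (p : X → Y → ℝ) (f : X → T) (x : X) (y : Y) : ℝ :=
  fiberSum f (p · y) (f x) * (∑ y', p x y') / fiberSum f (fun x' => ∑ y', p x' y') (f x)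

/-- The weight `s` of the Gibbs-inequality argument sketched above. -/
noncomputable def synergyRef (c : X → V → ℝ) (p : X → Y → ℝ) (f : X → T)
    (x : X) (y : Y) (v : V) : ℝ :=
  c x v * condIndepJoint p f x y *
    (markovJoint c p v y / ((∑ y', markovJoint c p v y') * ∑ x', p x' y))

lemma condIndepJoint_nonneg (hp : ∀ x y, 0 ≤ p x y) (f : X → T) (x : X) (y : Y) :
    0 ≤ condIndepJoint p f x y :=
  div_nonneg (mul_nonneg (fiberSum_nonneg f (hp · y) _) (sum_nonneg fun y' _ => hp x y'))
    (fiberSum_nonneg f (fun x' => sum_nonneg fun y' _ => hp x' y') _)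

lemma condIndepJoint_pos (hp : ∀ x y, 0 ≤ p x y) (f : X → T) {x : X} {y : Y}
    (hxy : 0 < p x y) : 0 < condIndepJoint p f x y := by
  have hpYF : 0 < fiberSum f (p · y) (f x) := hxy.trans_le (le_fiberSum_apply f (hp · y) x)
  have hpX : 0 < ∑ y', p x y' :=
    hxy.trans_le (single_le_sum (fun y' _ => hp x y') (mem_univ y))
  have hpF : 0 < fiberSum f (fun x' => ∑ y', p x' y') (f x) :=
    hpX.trans_le (le_fiberSum_apply f (fun x' => sum_nonneg fun y' _ => hp x' y') x)
  unfold condIndepJoint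
  positivity

theorem CMI_eq_sum_mul_logb_div_condIndepJoint [Fintype T] [Fintype U] [DecidableEq T]
    [DecidableEq U] {g : X → U} {f : X → T} (hinj : Injective fun x => (g x, f x))
    (p : X → Y → ℝ) :
    CMI (fun y b a => ∑ x, if g x = b ∧ f x = a then p x y else 0) =
      ∑ x, ∑ y, p x y * logb 2 (p x y / condIndepJoint p f x y) := by
  rw [sum_comm]
  refine sum_congr rfl fun y _ => ?_
  rw [← Fintype.sum_prod_type']
  refine (Fintype.sum_of_injective _ hinj _ _ (fun ba hba => ?_) (fun x => ?_)).symm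
  · have hzero : ∀ y', (∑ x, if g x = ba.1 ∧ f x = ba.2 then p x y' else 0) = 0 :=
      fun y' => sum_eq_zero fun x _ => if_neg fun H => hba ⟨x, Prod.ext H.1 H.2⟩
    simp [hzero]
  · simp only [sum_ite_and_eq_of_injective hinj, sum_ite_and_eq_fiberSum, ← fiberSum_sum,
      ite_eq_zero_zero_mul, condIndepJoint, div_div_eq_mul_div]

lemma sum_markovJoint_right (v : V) :
    ∑ y, markovJoint c p v y = ∑ x, c x v * ∑ y, p x y := by
  simp only [markovJoint, mul_sum]
  exact sum_comm

theorem MI_markovJoint [Fintype V] (hc : ∀ x, ∑ v, c x v = 1) :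
    MI (markovJoint c p) = ∑ v, ∑ y, markovJoint c p v y *
      logb 2 (markovJoint c p v y / ((∑ y', markovJoint c p v y') * ∑ x, p x y)) := by
  simp only [MI, ite_eq_zero_zero_mul, sum_markovJoint_left hc]

theorem sum_mul_condIndepJoint_le [Fintype V] [Fintype T] {f : X → T} (hp : ∀ x y, 0 ≤ p x y)
    (hc : IsChannel c) (hind : IndepWithFun (fun v x => c x v * ∑ y, p x y) f) (v : V) (y : Y) :
    ∑ x, c x v * condIndepJoint p f x y ≤ (∑ y', markovJoint c p v y') * ∑ x, p x y := by
  set pX : X → ℝ := fun x => ∑ y', p x y'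
  have hfiber : ∀ t, fiberSum f (fun x => c x v * pX x) t =
      (∑ x, c x v * pX x) * fiberSum f pX t := by
    intro t
    have hpF : ∑ v', fiberSum f (fun x => c x v' * pX x) t = fiberSum f pX t := by
      rw [← fiberSum_sum]
      simp only [← sum_mul, hc.2, one_mul]
    exact (hind v t).trans (congrArg _ hpF)
  calc ∑ x, c x v * condIndepJoint p f x y
      = ∑ x, (c x v * pX x) * (fiberSum f (p · y) (f x) / fiberSum f pX (f x)) := by
        simp only [condIndepJoint]
        exact sum_congr rfl fun x _ => by ring
    _ = ∑ t, (∑ x, c x v * pX x) *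
          (fiberSum f pX t * (fiberSum f (p · y) t / fiberSum f pX t)) := by
        rw [sum_mul_comp_eq_sum_fiberSum_mul f (fun x => c x v * pX x)
          fun t => fiberSum f (p · y) t / fiberSum f pX t]
        simp only [hfiber, mul_assoc]
    _ ≤ ∑ t, (∑ x, c x v * pX x) * fiberSum f (p · y) t := by
        gcongr with t
        · exact sum_nonneg fun x _ => mul_nonneg (hc.1 x v) (sum_nonneg fun y' _ => hp x y')
        · exact mul_div_le_of_nonneg _ (fiberSum_nonneg f (hp · y) t)
    _ = (∑ y', markovJoint c p v y') * ∑ x, p x y := by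
        rw [← mul_sum, sum_fiberSum, sum_markovJoint_right]

lemma markovJoint_div_pos (hp : ∀ x y, 0 ≤ p x y) (hc : ∀ x v, 0 ≤ c x v) {x : X} {y : Y}
    {v : V} (hcxv : 0 < c x v) (hpxy : 0 < p x y) :
    0 < markovJoint c p v y / ((∑ y', markovJoint c p v y') * ∑ x', p x' y) := by
  have hq : 0 < markovJoint c p v y := (mul_pos hcxv hpxy).trans_le
    (single_le_sum (fun x' _ => mul_nonneg (hc x' v) (hp x' y)) (mem_univ x))
  have hqV : 0 < ∑ y', markovJoint c p v y' :=
    hq.trans_le (single_le_sum (fun y' _ => markovJoint_nonneg hp hc v y') (mem_univ y))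
  have hpY : 0 < ∑ x', p x' y :=
    hpxy.trans_le (single_le_sum (fun x' _ => hp x' y) (mem_univ x))
  positivity

lemma synergyRef_nonneg (hp : ∀ x y, 0 ≤ p x y) (hc : ∀ x v, 0 ≤ c x v) (f : X → T)
    (x : X) (y : Y) (v : V) : 0 ≤ synergyRef c p f x y v :=
  mul_nonneg (mul_nonneg (hc x v) (condIndepJoint_nonneg hp f x y))
    (div_nonneg (markovJoint_nonneg hp hc v y) (mul_nonneg
      (sum_nonneg fun y' _ => markovJoint_nonneg hp hc v y') (sum_nonneg fun x' _ => hp x' y)))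

lemma synergyRef_pos (hp : ∀ x y, 0 ≤ p x y) (hc : ∀ x v, 0 ≤ c x v) (f : X → T) {x : X}
    {y : Y} {v : V} (hcxv : 0 < c x v) (hpxy : 0 < p x y) : 0 < synergyRef c p f x y v :=
  mul_pos (mul_pos hcxv (condIndepJoint_pos hp f hpxy)) (markovJoint_div_pos hp hc hcxv hpxy)

lemma mul_logb_div_synergyRef (hp : ∀ x y, 0 ≤ p x y) (hc : ∀ x v, 0 ≤ c x v) (f : X → T)
    (x : X) (y : Y) (v : V) :
    c x v * p x y * logb 2 (c x v * p x y / synergyRef c p f x y v) =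
      c x v * p x y * logb 2 (p x y / condIndepJoint p f x y) -
        c x v * p x y * logb 2
          (markovJoint c p v y / ((∑ y', markovJoint c p v y') * ∑ x', p x' y)) := by
  rcases eq_or_ne (c x v * p x y) 0 with hw | hw
  · simp [hw]
  have hcxv := (hc x v).lt_of_ne' (left_ne_zero_of_mul hw)
  have hpxy := (hp x y).lt_of_ne' (right_ne_zero_of_mul hw)
  have hr := condIndepJoint_pos hp f hpxy
  rw [← mul_sub, ← logb_div (div_pos hpxy hr).ne' (markovJoint_div_pos hp hc hcxv hpxy).ne',
    synergyRef, mul_assoc (c x v) (condIndepJoint p f x y), mul_div_mul_left _ _ hcxv.ne',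
    div_div]

theorem sum_synergyRef_le [Fintype V] [Fintype T] {f : X → T} (hp : ∀ x y, 0 ≤ p x y)
    (hc : IsChannel c) (hind : IndepWithFun (fun v x => c x v * ∑ y, p x y) f) :
    ∑ x, ∑ y, ∑ v, synergyRef c p f x y v ≤ ∑ x, ∑ y, p x y := by
  set m : V → Y → ℝ := fun v y => (∑ y', markovJoint c p v y') * ∑ x', p x' y
  have hm : ∀ v y, 0 ≤ m v y := fun v y => mul_nonneg
    (sum_nonneg fun y' _ => markovJoint_nonneg hp hc.1 v y') (sum_nonneg fun x _ => hp x y)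
  calc ∑ x, ∑ y, ∑ v, synergyRef c p f x y v
      = ∑ y, ∑ v, (∑ x, c x v * condIndepJoint p f x y) * (markovJoint c p v y / m v y) := by
        rw [sum_comm_cycle, sum_comm_cycle]
        exact sum_congr rfl fun y _ => sum_congr rfl fun v _ => (sum_mul _ _ _).symm
    _ ≤ ∑ y, ∑ v, m v y * (markovJoint c p v y / m v y) := by
        gcongr with y _ v _
        · exact div_nonneg (markovJoint_nonneg hp hc.1 v y) (hm v y)
        · exact sum_mul_condIndepJoint_le hp hc hind v y
    _ ≤ ∑ y, ∑ v, markovJoint c p v y := by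
        gcongr with y _ v _
        exact mul_div_le_of_nonneg _ (markovJoint_nonneg hp hc.1 v y)
    _ = ∑ x, ∑ y, p x y := by
        simp only [sum_markovJoint_left hc.2]
        exact sum_comm

theorem MI_markovJoint_le_CMI [Fintype V] [Fintype T] [Fintype U] [DecidableEq T]
    [DecidableEq U] {g : X → U} {f : X → T} (hp : ∀ x y, 0 ≤ p x y) (hc : IsChannel c)
    (hinj : Injective fun x => (g x, f x))
    (hind : IndepWithFun (fun v x => c x v * ∑ y, p x y) f) :
    MI (markovJoint c p) ≤
      CMI (fun y b a => ∑ x, if g x = b ∧ f x = a then p x y else 0) := by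
  have hgibbs := sum_mul_logb_div_nonneg (w := fun i : X × Y × V => c i.1 i.2.2 * p i.1 i.2.1)
    (s := fun i => synergyRef c p f i.1 i.2.1 i.2.2) (fun i => mul_nonneg (hc.1 _ _) (hp _ _))
    (fun i => synergyRef_nonneg hp hc.1 f _ _ _)
    (fun i hi => synergyRef_pos hp hc.1 f (pos_of_mul_pos_left hi (hp _ _))
      (pos_of_mul_pos_right hi (hc.1 _ _)))
    (by simpa only [Fintype.sum_prod_type, ← sum_mul, hc.2, one_mul]
      using sum_synergyRef_le hp hc hind)
  simp only [Fintype.sum_prod_type, mul_logb_div_synergyRef hp hc.1, sum_sub_distrib] at hgibbs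
  rw [← sub_nonneg, CMI_eq_sum_mul_logb_div_condIndepJoint hinj, MI_markovJoint hc.2]
  convert hgibbs using 2
  · simp only [← sum_mul, hc.2, one_mul]
  · rw [sum_comm_cycle]
    refine sum_congr rfl fun v _ => ?_
    rw [sum_comm]
    exact sum_congr rfl fun y _ => sum_mul _ _ _

end Synergy

lemma injective_restr_compl_restr {n : ℕ} {𝓧 : Fin n → Type*} (α : Finset (Fin n)) :
    Injective fun x : (∀ i, 𝓧 i) => (restr αᶜ x, restr α x) := by
  intro x x' h
  funext i
  by_cases hi : i ∈ α
  · exact congrFun (congrArg Prod.snd h) ⟨i, hi⟩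
  · exact congrFun (congrArg Prod.fst h) ⟨i, mem_compl.mpr hi⟩

/-- `S^𝛂(X → Y) ≤ min_{α ∈ 𝛂} I(Y; X^{-α} | X^α)`. -/
theorem syn_le_min_cmi
    {n : ℕ} {𝓧 : Fin n → Type*} [∀ i, Fintype (𝓧 i)] {Y : Type*} [Fintype Y]
    (p : (∀ i, 𝓧 i) → Y → ℝ) (hp : IsJoint p)
    (A : Finset (Finset (Fin n))) (hA : A.Nonempty) :
    Syn p A ≤ A.inf' hA (fun α =>
      CMI (fun (y : Y) (b : ∀ i : ↥αᶜ, 𝓧 i.1) (a : ∀ i : ↥α, 𝓧 i.1) =>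
        ∑ x, if restr αᶜ x = b ∧ restr α x = a then p x y else 0)) := by
  refine le_inf' hA _ fun α hα =>
    Real.sSup_le ?_ (CMI_nonneg fun y b a => sum_nonneg fun x _ => ?_)
  · rintro r ⟨k, c, hc, hind, rfl⟩
    exact MI_markovJoint_le_CMI hp.1 hc (injective_restr_compl_restr α) (hind α hα)
  · split_ifs
    exacts [hp.1 x y, le_rfl]
end

section
/- Self-synergy bound: S^𝛂(X → X) ≤ H(X) − max_{α_j ∈ 𝛂} H(X^{α_j}). -/
open Finset
open scoped BigOperators Classical

/-!
If `V ⫫ f(X)`, then `I(V;X) = I(V;X | f(X)) ≤ H(X | f(X)) = H(X) - H(f(X))`. Concretely,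
`I(V;X) + H(f(X)) - H(X)` is the sum of `q(v,x) log (q(v,x) / q(v,f(x)))`, because
independence factors `q(v,f(x)) = q(v) p(f(x))`; every term is `≤ 0` since the fibre mass
`q(v,f(x))` dominates `q(v,x)`. For self-synergy `Y = X`, and applying this with
`f = restr α` for each `α ∈ 𝛂` bounds the supremum.
-/

section Entropy

variable {V X T : Type*} [Fintype V] [Fintype X]

noncomputable def distMap [DecidableEq T] (f : X → T) (p : X → ℝ) (t : T) : ℝ :=
  ∑ x, if f x = t then p x else 0

lemma sum_mul_comp_eq_sum_distMap [Fintype T] [DecidableEq T] (f : X → T) (p : X → ℝ)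
    (g : T → ℝ) :
    ∑ x, p x * g (f x) = ∑ t, distMap f p t * g t := by
  simp only [distMap, Finset.sum_mul, ite_mul, zero_mul]
  rw [Finset.sum_comm]
  simp

lemma le_distMap_apply [DecidableEq T] (f : X → T) {p : X → ℝ} (hp : ∀ x, 0 ≤ p x)
    (x : X) :
    p x ≤ distMap f p (f x) := by
  have := Finset.single_le_sum (f := fun x' => if f x' = f x then p x' else 0)
    (fun y _ => by split <;> simp [hp y]) (Finset.mem_univ x)
  simpa [distMap] using this

lemma sum_distMap [DecidableEq T] (f : X → T) (q : V → X → ℝ) (t : T) :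
    ∑ v, distMap f (q v) t = distMap f (fun x => ∑ v, q v x) t := by
  simp only [distMap]
  rw [Finset.sum_comm]
  exact Finset.sum_congr rfl fun x _ => by split <;> simp

lemma IndepWithFun.distMap_eq [DecidableEq T] {q : V → X → ℝ} {f : X → T}
    (h : IndepWithFun q f) (v : V) (t : T) :
    distMap f (q v) t = (∑ x, q v x) * ∑ v', distMap f (q v') t := by
  unfold distMap
  convert h v t

lemma H_eq_neg_sum (p : X → ℝ) : H p = -∑ x, p x * Real.logb 2 (p x) := by
  rw [H, ← Finset.sum_neg_distrib]
  exact Finset.sum_congr rfl fun x _ => by split <;> simp [*]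

lemma H_distMap [Fintype T] [DecidableEq T] (f : X → T) (p : X → ℝ) :
    H (distMap f p) = -∑ x, p x * Real.logb 2 (distMap f p (f x)) := by
  rw [H_eq_neg_sum, sum_mul_comp_eq_sum_distMap f p (fun t => Real.logb 2 (distMap f p t))]

lemma MI_eq_sum {A B : Type*} [Fintype A] [Fintype B] (p : A → B → ℝ) :
    MI p = ∑ a, ∑ b, p a b * Real.logb 2 (p a b / ((∑ b', p a b') * (∑ a', p a' b))) := by
  rw [MI]
  exact Finset.sum_congr rfl fun a _ => Finset.sum_congr rfl fun b _ => by split <;> simp [*]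

lemma sum_mul_eq_sum_sum_of_marginal {q : V → X → ℝ} {p : X → ℝ}
    (hp : ∀ x, ∑ v, q v x = p x) (g : X → ℝ) :
    ∑ x, p x * g x = ∑ v, ∑ x, q v x * g x := by
  simp only [← hp, Finset.sum_mul]
  exact Finset.sum_comm

lemma mul_logb_div_nonpos {a m : ℝ} (ha : 0 ≤ a) (ham : a ≤ m) :
    a * Real.logb 2 (a / m) ≤ 0 := by
  rcases ha.eq_or_lt with rfl | ha
  · simp
  · exact mul_nonpos_of_nonneg_of_nonpos ha.le
      (Real.logb_nonpos one_lt_two (div_nonneg ha.le (ha.le.trans ham))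
        ((div_le_one (ha.trans_le ham)).mpr ham))

theorem MI_le_H_sub_H_distMap [Fintype T] [DecidableEq T] {q : V → X → ℝ}
    (hq : ∀ v x, 0 ≤ q v x) {p : X → ℝ} (hp : ∀ x, ∑ v, q v x = p x) {f : X → T}
    (hind : IndepWithFun q f) :
    MI q ≤ H p - H (distMap f p) := by
  have hfactor : ∀ v x, distMap f (q v) (f x) = (∑ x', q v x') * distMap f p (f x) := by
    intro v x
    rw [← funext hp, ← sum_distMap]
    exact hind.distMap_eq v (f x)
  have hterm : ∀ v x,
      q v x * Real.logb 2 (q v x / ((∑ x', q v x') * p x))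
        - q v x * Real.logb 2 (distMap f p (f x)) + q v x * Real.logb 2 (p x)
        = q v x * Real.logb 2 (q v x / distMap f (q v) (f x)) := by
    intro v x
    rcases (hq v x).eq_or_lt with h0 | hpos
    · simp [← h0]
    have hV : 0 < ∑ x', q v x' := hpos.trans_le
      (Finset.single_le_sum (fun y _ => hq v y) (Finset.mem_univ x))
    have hX : 0 < p x := hp x ▸ hpos.trans_le
      (Finset.single_le_sum (fun w _ => hq w x) (Finset.mem_univ v))
    have hT : 0 < distMap f p (f x) :=
      hX.trans_le (le_distMap_apply f (fun y => hp y ▸ Finset.sum_nonneg fun w _ => hq w y) x)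
    rw [hfactor, Real.logb_div hpos.ne' (mul_pos hV hX).ne',
      Real.logb_div hpos.ne' (mul_pos hV hT).ne', Real.logb_mul hV.ne' hX.ne',
      Real.logb_mul hV.ne' hT.ne']
    ring
  have hsplit : MI q + H (distMap f p) - H p
      = ∑ v, ∑ x, q v x * Real.logb 2 (q v x / distMap f (q v) (f x)) := by
    rw [MI_eq_sum, H_distMap, H_eq_neg_sum,
      sum_mul_eq_sum_sum_of_marginal hp (fun x => Real.logb 2 (distMap f p (f x))),
      sum_mul_eq_sum_sum_of_marginal hp (fun x => Real.logb 2 (p x))]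
    simp only [hp, ← sub_eq_add_neg, sub_neg_eq_add, ← Finset.sum_sub_distrib,
      ← Finset.sum_add_distrib, hterm]
  have hnonpos : ∑ v, ∑ x, q v x * Real.logb 2 (q v x / distMap f (q v) (f x)) ≤ 0 :=
    Finset.sum_nonpos fun v _ => Finset.sum_nonpos fun x _ =>
      mul_logb_div_nonpos (hq v x) (le_distMap_apply f (hq v) x)
  linarith

end Entropy

section SelfSynergy

variable {n : ℕ} {𝓧 : Fin n → Type*} [∀ i, Fintype (𝓧 i)]

lemma synSet_nonempty {Y : Type*} [Fintype Y] {p : (∀ i, 𝓧 i) → Y → ℝ}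
    (hp : ∑ x, ∑ y, p x y = 1) (A : Finset (Finset (Fin n))) : (synSet p A).Nonempty := by
  refine ⟨_, 1, fun _ _ => 1, ⟨fun _ _ => zero_le_one, fun _ => by simp⟩, ?_, rfl⟩
  intro α _ v t
  simp [hp]

lemma sum_selfJoint {X : Type*} [Fintype X] (p : X → ℝ) (x : X) :
    ∑ y, selfJoint p x y = p x := by
  simp [selfJoint]

lemma sum_mul_selfJoint {X : Type*} [Fintype X] (p : X → ℝ) (c : X → ℝ) (y : X) :
    ∑ x, c x * selfJoint p x y = c y * p y := by
  simp [selfJoint, mul_ite]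

lemma le_H_sub_H_of_mem_synSet_selfJoint {pX : (∀ i, 𝓧 i) → ℝ} (hpX : ∀ x, 0 ≤ pX x)
    {A : Finset (Finset (Fin n))} {r : ℝ} (hr : r ∈ synSet (selfJoint pX) A)
    {α : Finset (Fin n)} (hα : α ∈ A) :
    r ≤ H pX - H (distMap (restr α) pX) := by
  obtain ⟨k, c, hc, hindep, rfl⟩ := hr
  have hmarg : ∀ x, ∑ v, c x v * pX x = pX x := fun x => by
    rw [← Finset.sum_mul, hc.2 x, one_mul]
  have hind := hindep α hα
  simp only [sum_selfJoint] at hind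
  simp only [sum_mul_selfJoint]
  exact MI_le_H_sub_H_distMap (fun v x => mul_nonneg (hc.1 x v) (hpX x)) hmarg hind

end SelfSynergy

/-- self-synergy bound `S^𝛂(X → X) ≤ H(X) − max_{α ∈ 𝛂} H(X^α)`. -/
theorem self_syn_upper_bound
    {n : ℕ} {𝓧 : Fin n → Type*} [∀ i, Fintype (𝓧 i)]
    (pX : (∀ i, 𝓧 i) → ℝ) (hpX : IsDist pX)
    (A : Finset (Finset (Fin n))) (hA : A.Nonempty) :
    Syn (selfJoint pX) A ≤ H pX - A.sup' hA (fun α =>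
      H (fun (a : ∀ i : ↥α, 𝓧 i.1) => ∑ x, if restr α x = a then pX x else 0)) := by
  have hmass : ∑ x, ∑ y, selfJoint pX x y = 1 := by simp only [sum_selfJoint, hpX.2]
  refine csSup_le (synSet_nonempty hmass A) fun r hr => le_sub_comm.mpr ?_
  exact Finset.sup'_le hA _ fun α hα =>
    le_sub_comm.mpr (le_H_sub_H_of_mem_synSet_selfJoint hpX.1 hr hα)
end
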